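/- arXiv:2512.02989 — 5 statements merged into one kernel-verified Lean document; each statement's English description precedes it below -/
import Mathlib

section
/- Let g > 0, L_ℓ, L_r > 0, T > 0. Let (h_ℓ, v_ℓ) be a continuously differentiable solution on [0,T] × [0,L_ℓ] and (h_r, v_r) a continuously differentiable solution on [0,T] × [0,L_r] of the homogeneous shallow water equations ∂ₜh + ∂ₓ(hv) = 0, ∂ₜ(hv) + ∂ₓ(hv² + ½gh²) = 0, with h_ℓ, h_r > 0. Assume the no-flux external boundary conditions v_ℓ(t, 0) = 0 and v_r(t, L_r) = 0, and the junction conditions h_ℓ(t, L_ℓ) = h_r(t, 0) and (h_ℓ v_ℓ)(t, L_ℓ) = (h_r v_r)(t, 0) for all t ∈ [0,T]. Then for all t ∈ [0,T], ∫₀^{L_ℓ} η(h_ℓ, v_ℓ)(t,x) dx + ∫₀^{L_r} η(h_r, v_r)(t,x) dx = ∫₀^{L_ℓ} η(h_ℓ, v_ℓ)(0,x) dx + ∫₀^{L_r} η(h_r, v_r)(0,x) dx; in particular the total entropy is non-increasing in time. -/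
/-!
Multiplying the mass equation by `g h - v² / 2` and the momentum equation by `v` and adding gives
the entropy equation `∂ₜη + ∂ₓG = 0` for smooth solutions. The divergence theorem on
`[0, t] × [0, L]` turns it, canal by canal, into the balance `∫ η(t) - ∫ η(0) = -∫₀ᵗ [G]` of
boundary fluxes. The flux `G = (½hv² + gh²)v` vanishes at the walls, where `v = 0`; at the
junction, continuity of `h` and of `hv` with `h > 0` give continuity of `v`, so the two junction
fluxes are equal and cancel.
-/

open Set MeasureTheory

theorem intervalIntegral.integral_eq_zero_of_forall_mem_Ioo {f : ℝ → ℝ} {a b : ℝ} (hab : a ≤ b)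
    (hf : ∀ x ∈ Ioo a b, f x = 0) : ∫ x in a..b, f x = 0 := by
  rw [intervalIntegral.integral_of_le hab, integral_Ioc_eq_integral_Ioo]
  exact setIntegral_eq_zero_of_forall_eq_zero hf

theorem DifferentiableAt.fderiv_apply_one_zero {f : ℝ × ℝ → ℝ} {p : ℝ × ℝ}
    (hf : DifferentiableAt ℝ f p) : fderiv ℝ f p (1, 0) = deriv (fun s => f (s, p.2)) p.1 :=
  (hf.hasFDerivAt.comp_hasDerivAt p.1
    ((hasDerivAt_id p.1).prodMk (hasDerivAt_const _ _))).deriv.symm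

theorem DifferentiableAt.fderiv_apply_zero_one {f : ℝ × ℝ → ℝ} {p : ℝ × ℝ}
    (hf : DifferentiableAt ℝ f p) : fderiv ℝ f p (0, 1) = deriv (fun y => f (p.1, y)) p.2 :=
  (hf.hasFDerivAt.comp_hasDerivAt p.2
    ((hasDerivAt_const _ _).prodMk (hasDerivAt_id p.2))).deriv.symm

theorem ContDiffOn.differentiableAt_of_mem_Ioo_prod {f : ℝ × ℝ → ℝ} {a₁ b₁ a₂ b₂ s x : ℝ}
    (hf : ContDiffOn ℝ 1 f (Icc a₁ b₁ ×ˢ Icc a₂ b₂)) (hs : s ∈ Ioo a₁ b₁) (hx : x ∈ Ioo a₂ b₂) :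
    DifferentiableAt ℝ f (s, x) :=
  (hf.contDiffAt (prod_mem_nhds (Icc_mem_nhds hs.1 hs.2) (Icc_mem_nhds hx.1 hx.2))).differentiableAt
    one_ne_zero

theorem integral_sub_integral_eq_flux_of_conservation_law {η G : ℝ × ℝ → ℝ} {a₁ b₁ a₂ b₂ : ℝ}
    (h₁ : a₁ < b₁) (h₂ : a₂ < b₂)
    (hη : ContDiffOn ℝ 1 η (Icc a₁ b₁ ×ˢ Icc a₂ b₂))
    (hG : ContDiffOn ℝ 1 G (Icc a₁ b₁ ×ˢ Icc a₂ b₂))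
    (hdiv : ∀ t ∈ Ioo a₁ b₁, ∀ x ∈ Ioo a₂ b₂,
      deriv (fun s => η (s, x)) t + deriv (fun y => G (t, y)) x = 0) :
    (∫ x in a₂..b₂, η (b₁, x)) - ∫ x in a₂..b₂, η (a₁, x) =
      (∫ t in a₁..b₁, G (t, a₂)) - ∫ t in a₁..b₁, G (t, b₂) := by
  -- Derivatives within the closed rectangle are continuous up to its boundary, which makes the
  -- divergence integrable; in the interior they are the ordinary ones.
  set R := Icc a₁ b₁ ×ˢ Icc a₂ b₂
  have hR : UniqueDiffOn ℝ R := by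
    refine uniqueDiffOn_convex ((convex_Icc _ _).prod (convex_Icc _ _)) ?_
    rw [interior_prod_eq, interior_Icc, interior_Icc]
    exact (nonempty_Ioo.2 h₁).prod (nonempty_Ioo.2 h₂)
  have hderiv : ∀ {f : ℝ × ℝ → ℝ}, ContDiffOn ℝ 1 f R →
      ∀ p ∈ Ioo a₁ b₁ ×ˢ Ioo a₂ b₂, HasFDerivAt f (fderivWithin ℝ f R p) p := by
    rintro f hf ⟨t, x⟩ ⟨ht, hx⟩
    rw [fderivWithin_of_mem_nhds (prod_mem_nhds (Icc_mem_nhds ht.1 ht.2) (Icc_mem_nhds hx.1 hx.2))]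
    exact (hf.differentiableAt_of_mem_Ioo_prod ht hx).hasFDerivAt
  have hcont : ∀ {f : ℝ × ℝ → ℝ}, ContDiffOn ℝ 1 f R → ∀ w : ℝ × ℝ,
      ContinuousOn (fun p => fderivWithin ℝ f R p w) R := fun hf w =>
    (ContinuousLinearMap.apply ℝ ℝ w).continuous.comp_continuousOn
      (hf.continuousOn_fderivWithin hR le_rfl)
  have hdiv' : ∀ t ∈ Ioo a₁ b₁, ∀ x ∈ Ioo a₂ b₂,
      fderivWithin ℝ η R (t, x) (1, 0) + fderivWithin ℝ G R (t, x) (0, 1) = 0 := by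
    intro t ht x hx
    rw [(hderiv hη _ ⟨ht, hx⟩).fderiv.symm, (hderiv hG _ ⟨ht, hx⟩).fderiv.symm,
      (hη.differentiableAt_of_mem_Ioo_prod ht hx).fderiv_apply_one_zero,
      (hG.differentiableAt_of_mem_Ioo_prod ht hx).fderiv_apply_zero_one]
    exact hdiv t ht x hx
  have hgreen := integral2_divergence_prod_of_hasFDerivAt η G (fderivWithin ℝ η R)
    (fderivWithin ℝ G R) a₁ a₂ b₁ b₂
    (by simpa only [uIcc_of_le h₁.le, uIcc_of_le h₂.le] using hη.continuousOn)
    (by simpa only [uIcc_of_le h₁.le, uIcc_of_le h₂.le] using hG.continuousOn)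
    (by simpa only [min_eq_left h₁.le, max_eq_right h₁.le, min_eq_left h₂.le,
      max_eq_right h₂.le] using hderiv hη)
    (by simpa only [min_eq_left h₁.le, max_eq_right h₁.le, min_eq_left h₂.le,
      max_eq_right h₂.le] using hderiv hG)
    (by
      rw [uIcc_of_le h₁.le, uIcc_of_le h₂.le]
      exact ((hcont hη _).add (hcont hG _)).integrableOn_compact (isCompact_Icc.prod isCompact_Icc))
  have hzero : (∫ t in a₁..b₁, ∫ x in a₂..b₂,
      fderivWithin ℝ η R (t, x) (1, 0) + fderivWithin ℝ G R (t, x) (0, 1)) = 0 := by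
    exact intervalIntegral.integral_eq_zero_of_forall_mem_Ioo h₁.le fun t ht =>
      intervalIntegral.integral_eq_zero_of_forall_mem_Ioo h₂.le fun x hx => hdiv' t ht x hx
  linarith

namespace ShallowWater

noncomputable def entropy (g h v : ℝ) : ℝ := (1 / 2) * h * v ^ 2 + (g / 2) * h ^ 2

noncomputable def entropyFlux (g h v : ℝ) : ℝ := ((1 / 2) * h * v ^ 2 + g * h ^ 2) * v

theorem deriv_entropy_add_deriv_entropyFlux {g s x : ℝ} {h₁ v₁ h₂ v₂ : ℝ → ℝ}
    (hh₁ : DifferentiableAt ℝ h₁ s) (hv₁ : DifferentiableAt ℝ v₁ s)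
    (hh₂ : DifferentiableAt ℝ h₂ x) (hv₂ : DifferentiableAt ℝ v₂ x)
    (hh : h₁ s = h₂ x) (hv : v₁ s = v₂ x)
    (mass : deriv h₁ s + deriv (fun y => h₂ y * v₂ y) x = 0)
    (mom : deriv (fun s => h₁ s * v₁ s) s +
      deriv (fun y => h₂ y * v₂ y ^ 2 + (1 / 2) * g * h₂ y ^ 2) x = 0) :
    deriv (fun s => entropy g (h₁ s) (v₁ s)) s +
      deriv (fun y => entropyFlux g (h₂ y) (v₂ y)) x = 0 := by
  simp only [entropy, entropyFlux]
  simp (disch := fun_prop) only [deriv_fun_add, deriv_fun_mul, deriv_fun_pow, deriv_const]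
    at mass mom ⊢
  rw [hh, hv] at mom ⊢
  linear_combination (g * h₂ x - v₂ x ^ 2 / 2) * mass + v₂ x * mom

theorem integral_entropy_eq {g T L t : ℝ} (hL : 0 < L) {h v : ℝ × ℝ → ℝ}
    (hh : ContDiffOn ℝ 1 h (Icc 0 T ×ˢ Icc 0 L)) (hv : ContDiffOn ℝ 1 v (Icc 0 T ×ˢ Icc 0 L))
    (mass : ∀ t ∈ Icc (0:ℝ) T, ∀ x ∈ Icc (0:ℝ) L,
      deriv (fun s => h (s, x)) t + deriv (fun y => h (t, y) * v (t, y)) x = 0)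
    (mom : ∀ t ∈ Icc (0:ℝ) T, ∀ x ∈ Icc (0:ℝ) L,
      deriv (fun s => h (s, x) * v (s, x)) t +
        deriv (fun y => h (t, y) * v (t, y) ^ 2 + (1 / 2) * g * h (t, y) ^ 2) x = 0)
    (ht : t ∈ Icc 0 T) :
    ∫ x in (0:ℝ)..L, entropy g (h (t, x)) (v (t, x)) =
      (∫ x in (0:ℝ)..L, entropy g (h (0, x)) (v (0, x))) +
        ((∫ s in (0:ℝ)..t, entropyFlux g (h (s, 0)) (v (s, 0))) -
          ∫ s in (0:ℝ)..t, entropyFlux g (h (s, L)) (v (s, L))) := by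
  rcases ht.1.eq_or_lt with rfl | htpos
  · simp
  have hsub : Icc 0 t ×ˢ Icc 0 L ⊆ Icc 0 T ×ˢ Icc 0 L :=
    prod_mono (Icc_subset_Icc_right ht.2) subset_rfl
  have hh' := hh.mono hsub
  have hv' := hv.mono hsub
  have hbalance := integral_sub_integral_eq_flux_of_conservation_law htpos hL
    (η := fun p => entropy g (h p) (v p)) (G := fun p => entropyFlux g (h p) (v p))
    (by unfold entropy; fun_prop) (by unfold entropyFlux; fun_prop) (by
      intro s hs x hx
      have hsT : s ∈ Ioo 0 T := ⟨hs.1, hs.2.trans_le ht.2⟩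
      have hdh := hh.differentiableAt_of_mem_Ioo_prod hsT hx
      have hdv := hv.differentiableAt_of_mem_Ioo_prod hsT hx
      exact deriv_entropy_add_deriv_entropyFlux (by fun_prop) (by fun_prop) (by fun_prop)
        (by fun_prop) rfl rfl (mass s (Ioo_subset_Icc_self hsT) x (Ioo_subset_Icc_self hx))
        (mom s (Ioo_subset_Icc_self hsT) x (Ioo_subset_Icc_self hx)))
  linarith

theorem entropyFlux_zero_right (g h : ℝ) : entropyFlux g h 0 = 0 := by
  simp [entropyFlux]

theorem entropyFlux_eq_of_height_eq_of_discharge_eq {g h₁ v₁ h₂ v₂ : ℝ} (hh : h₁ = h₂)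
    (hq : h₁ * v₁ = h₂ * v₂) (hpos : h₂ ≠ 0) : entropyFlux g h₁ v₁ = entropyFlux g h₂ v₂ := by
  subst hh
  rw [mul_left_cancel₀ hpos hq]

end ShallowWater

theorem shallow_water_network_entropy_conservation_general
    (g Ll Lr T : ℝ) (hLl : 0 < Ll) (hLr : 0 < Lr)
    (hl vl hr vr : ℝ × ℝ → ℝ)
    (hhl : ContDiffOn ℝ 1 hl (Set.Icc 0 T ×ˢ Set.Icc 0 Ll))
    (hvl : ContDiffOn ℝ 1 vl (Set.Icc 0 T ×ˢ Set.Icc 0 Ll))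
    (hhr : ContDiffOn ℝ 1 hr (Set.Icc 0 T ×ˢ Set.Icc 0 Lr))
    (hvr : ContDiffOn ℝ 1 vr (Set.Icc 0 T ×ˢ Set.Icc 0 Lr))
    (hposr : ∀ t ∈ Set.Icc (0:ℝ) T, ∀ x ∈ Set.Icc (0:ℝ) Lr, 0 < hr (t, x))
    (massl : ∀ t ∈ Set.Icc (0:ℝ) T, ∀ x ∈ Set.Icc (0:ℝ) Ll,
      deriv (fun s => hl (s, x)) t + deriv (fun y => hl (t, y) * vl (t, y)) x = 0)
    (moml : ∀ t ∈ Set.Icc (0:ℝ) T, ∀ x ∈ Set.Icc (0:ℝ) Ll,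
      deriv (fun s => hl (s, x) * vl (s, x)) t +
        deriv (fun y => hl (t, y) * vl (t, y) ^ 2 + (1 / 2) * g * hl (t, y) ^ 2) x = 0)
    (massr : ∀ t ∈ Set.Icc (0:ℝ) T, ∀ x ∈ Set.Icc (0:ℝ) Lr,
      deriv (fun s => hr (s, x)) t + deriv (fun y => hr (t, y) * vr (t, y)) x = 0)
    (momr : ∀ t ∈ Set.Icc (0:ℝ) T, ∀ x ∈ Set.Icc (0:ℝ) Lr,
      deriv (fun s => hr (s, x) * vr (s, x)) t +
        deriv (fun y => hr (t, y) * vr (t, y) ^ 2 + (1 / 2) * g * hr (t, y) ^ 2) x = 0)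
    (bcl : ∀ t ∈ Set.Icc (0:ℝ) T, vl (t, 0) = 0)
    (bcr : ∀ t ∈ Set.Icc (0:ℝ) T, vr (t, Lr) = 0)
    (junch : ∀ t ∈ Set.Icc (0:ℝ) T, hl (t, Ll) = hr (t, 0))
    (juncq : ∀ t ∈ Set.Icc (0:ℝ) T,
      hl (t, Ll) * vl (t, Ll) = hr (t, 0) * vr (t, 0)) :
    ∀ t ∈ Set.Icc (0:ℝ) T,
      ((∫ x in (0:ℝ)..Ll,
          ((1 / 2) * hl (t, x) * vl (t, x) ^ 2 + (g / 2) * hl (t, x) ^ 2)) +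
       (∫ x in (0:ℝ)..Lr,
          ((1 / 2) * hr (t, x) * vr (t, x) ^ 2 + (g / 2) * hr (t, x) ^ 2)))
      = ((∫ x in (0:ℝ)..Ll,
          ((1 / 2) * hl (0, x) * vl (0, x) ^ 2 + (g / 2) * hl (0, x) ^ 2)) +
         (∫ x in (0:ℝ)..Lr,
          ((1 / 2) * hr (0, x) * vr (0, x) ^ 2 + (g / 2) * hr (0, x) ^ 2))) := by
  intro t ht
  have hIcc : ∀ s ∈ uIcc 0 t, s ∈ Icc (0:ℝ) T := fun s hs => by
    rw [uIcc_of_le ht.1] at hs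
    exact ⟨hs.1, hs.2.trans ht.2⟩
  have hwall_l : ∫ s in (0:ℝ)..t, ShallowWater.entropyFlux g (hl (s, 0)) (vl (s, 0)) = 0 :=
    (intervalIntegral.integral_congr fun s hs => by
      simp only [bcl s (hIcc s hs), ShallowWater.entropyFlux_zero_right]).trans
      intervalIntegral.integral_zero
  have hwall_r : ∫ s in (0:ℝ)..t, ShallowWater.entropyFlux g (hr (s, Lr)) (vr (s, Lr)) = 0 :=
    (intervalIntegral.integral_congr fun s hs => by
      simp only [bcr s (hIcc s hs), ShallowWater.entropyFlux_zero_right]).trans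
      intervalIntegral.integral_zero
  have hjunction : ∫ s in (0:ℝ)..t, ShallowWater.entropyFlux g (hl (s, Ll)) (vl (s, Ll)) =
      ∫ s in (0:ℝ)..t, ShallowWater.entropyFlux g (hr (s, 0)) (vr (s, 0)) :=
    intervalIntegral.integral_congr fun s hs =>
      ShallowWater.entropyFlux_eq_of_height_eq_of_discharge_eq (junch s (hIcc s hs))
        (juncq s (hIcc s hs)) (hposr s (hIcc s hs) 0 (left_mem_Icc.2 hLr.le)).ne'
  have hleft := ShallowWater.integral_entropy_eq hLl hhl hvl massl moml ht
  have hright := ShallowWater.integral_entropy_eq hLr hhr hvr massr momr ht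
  unfold ShallowWater.entropy at hleft hright
  linarith

/-- On a 2-canal network with no-flux external boundary conditions and junction
conditions (continuity of height and of mass flux), smooth positive solutions of
the homogeneous shallow water equations conserve the total entropy
`∫ η(h_ℓ,v_ℓ) + ∫ η(h_r,v_r)` with `η = ½hv² + (g/2)h²`; in particular it is
non-increasing in time. -/
theorem shallow_water_network_entropy_conservation
    (g Ll Lr T : ℝ) (hg : 0 < g) (hLl : 0 < Ll) (hLr : 0 < Lr) (hT : 0 < T)
    (hl vl hr vr : ℝ × ℝ → ℝ)
    (hhl : ContDiffOn ℝ 1 hl (Set.Icc 0 T ×ˢ Set.Icc 0 Ll))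
    (hvl : ContDiffOn ℝ 1 vl (Set.Icc 0 T ×ˢ Set.Icc 0 Ll))
    (hhr : ContDiffOn ℝ 1 hr (Set.Icc 0 T ×ˢ Set.Icc 0 Lr))
    (hvr : ContDiffOn ℝ 1 vr (Set.Icc 0 T ×ˢ Set.Icc 0 Lr))
    (hposl : ∀ t ∈ Set.Icc (0:ℝ) T, ∀ x ∈ Set.Icc (0:ℝ) Ll, 0 < hl (t, x))
    (hposr : ∀ t ∈ Set.Icc (0:ℝ) T, ∀ x ∈ Set.Icc (0:ℝ) Lr, 0 < hr (t, x))
    (massl : ∀ t ∈ Set.Icc (0:ℝ) T, ∀ x ∈ Set.Icc (0:ℝ) Ll,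
      deriv (fun s => hl (s, x)) t + deriv (fun y => hl (t, y) * vl (t, y)) x = 0)
    (moml : ∀ t ∈ Set.Icc (0:ℝ) T, ∀ x ∈ Set.Icc (0:ℝ) Ll,
      deriv (fun s => hl (s, x) * vl (s, x)) t +
        deriv (fun y => hl (t, y) * vl (t, y) ^ 2 + (1 / 2) * g * hl (t, y) ^ 2) x = 0)
    (massr : ∀ t ∈ Set.Icc (0:ℝ) T, ∀ x ∈ Set.Icc (0:ℝ) Lr,
      deriv (fun s => hr (s, x)) t + deriv (fun y => hr (t, y) * vr (t, y)) x = 0)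
    (momr : ∀ t ∈ Set.Icc (0:ℝ) T, ∀ x ∈ Set.Icc (0:ℝ) Lr,
      deriv (fun s => hr (s, x) * vr (s, x)) t +
        deriv (fun y => hr (t, y) * vr (t, y) ^ 2 + (1 / 2) * g * hr (t, y) ^ 2) x = 0)
    (bcl : ∀ t ∈ Set.Icc (0:ℝ) T, vl (t, 0) = 0)
    (bcr : ∀ t ∈ Set.Icc (0:ℝ) T, vr (t, Lr) = 0)
    (junch : ∀ t ∈ Set.Icc (0:ℝ) T, hl (t, Ll) = hr (t, 0))
    (juncq : ∀ t ∈ Set.Icc (0:ℝ) T,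
      hl (t, Ll) * vl (t, Ll) = hr (t, 0) * vr (t, 0)) :
    ∀ t ∈ Set.Icc (0:ℝ) T,
      ((∫ x in (0:ℝ)..Ll,
          ((1 / 2) * hl (t, x) * vl (t, x) ^ 2 + (g / 2) * hl (t, x) ^ 2)) +
       (∫ x in (0:ℝ)..Lr,
          ((1 / 2) * hr (t, x) * vr (t, x) ^ 2 + (g / 2) * hr (t, x) ^ 2)))
      = ((∫ x in (0:ℝ)..Ll,
          ((1 / 2) * hl (0, x) * vl (0, x) ^ 2 + (g / 2) * hl (0, x) ^ 2)) +
         (∫ x in (0:ℝ)..Lr,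
          ((1 / 2) * hr (0, x) * vr (0, x) ^ 2 + (g / 2) * hr (0, x) ^ 2))) :=
  shallow_water_network_entropy_conservation_general g Ll Lr T hLl hLr hl vl hr vr hhl hvl hhr hvr
    hposr massl moml massr momr bcl bcr junch juncq
end

section
/- Let g > 0, h_ℓ > 0, v_ℓ ∈ ℝ, and define Φ_ℓ : (0,∞) → ℝ by Φ_ℓ(h) = v_ℓ − 2(√(gh) − √(gh_ℓ)) for h ≤ h_ℓ and Φ_ℓ(h) = v_ℓ − (h − h_ℓ)·√(g(h + h_ℓ)/(2·h·h_ℓ)) for h > h_ℓ. Similarly, for h_r > 0, v_r ∈ ℝ, define Φ_r : (0,∞) → ℝ by Φ_r(h) = v_r + 2(√(gh) − √(gh_r)) for h ≤ h_r and Φ_r(h) = v_r + (h − h_r)·√(g(h + h_r)/(2·h·h_r)) for h > h_r. Then Φ_ℓ is continuous, strictly decreasing on (0,∞), tends to v_ℓ + 2√(gh_ℓ) as h → 0⁺ and to −∞ as h → ∞; and Φ_r is continuous, strictly increasing on (0,∞), tends to v_r − 2√(gh_r) as h → 0⁺ and to +∞ as h → ∞. -/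
open Filter Topology Set

/-!
Both wave curves are `v ± W` with `W h = 2(√(gh) - √(gh₀))` on the rarefaction branch `h ≤ h₀`
and `W h = (h - h₀)√(g(h + h₀)/(2hh₀))` on the shock branch `h > h₀`. The branches vanish at `h₀`,
so `W` is continuous, and it is strictly increasing because each branch is: the shock branch is
`√(g/(2h₀) · (h + h₀)(h - h₀)²/h)`. Near `0⁺` only the rarefaction branch matters, giving the limit
`-2√(gh₀)`, and the shock branch grows at least like `(h - h₀)√(g/(2h₀))`.
-/

namespace ShallowWater

noncomputable def rarefaction (g h₀ h : ℝ) : ℝ := 2 * (√(g * h) - √(g * h₀))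

noncomputable def shock (g h₀ h : ℝ) : ℝ := (h - h₀) * √(g * (h + h₀) / (2 * h * h₀))

/-- `Φ_r = v_r + waveCurve g h_r` and `Φ_ℓ = v_ℓ - waveCurve g h_ℓ`. -/
noncomputable def waveCurve (g h₀ h : ℝ) : ℝ :=
  if h ≤ h₀ then rarefaction g h₀ h else shock g h₀ h

variable {g h₀ h : ℝ}

lemma rarefaction_self : rarefaction g h₀ h₀ = 0 := by simp [rarefaction]

lemma shock_self : shock g h₀ h₀ = 0 := by simp [shock]

lemma continuous_rarefaction : Continuous (rarefaction g h₀) := by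
  unfold rarefaction; fun_prop

lemma strictMonoOn_rarefaction (hg : 0 < g) : StrictMonoOn (rarefaction g h₀) (Ici 0) :=
  fun x (hx : 0 ≤ x) y _ hxy => by
    have : √(g * x) < √(g * y) := Real.sqrt_lt_sqrt (by positivity) (by gcongr)
    simp only [rarefaction]; linarith

lemma continuousOn_shock (hh₀ : 0 < h₀) : ContinuousOn (shock g h₀) (Ioi 0) := by
  unfold shock
  refine ContinuousOn.mul (by fun_prop) (ContinuousOn.sqrt ?_)
  exact ContinuousOn.div (by fun_prop) (by fun_prop) fun h (hh : 0 < h) => by positivity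

-- `(y + h₀)(y - h₀)²x - (x + h₀)(x - h₀)²y = (y - x)(xy(x + y - h₀) - h₀³)`
lemma strictMonoOn_add_mul_sub_sq_div (hh₀ : 0 < h₀) :
    StrictMonoOn (fun h => (h + h₀) * (h - h₀) ^ 2 / h) (Ici h₀) := by
  intro x (hx : h₀ ≤ x) y (hy : h₀ ≤ y) hxy
  have hx0 : 0 < x := hh₀.trans_le hx
  have hy0 : 0 < y := hx0.trans hxy
  rw [div_lt_div_iff₀ hx0 hy0]
  have hxy₀ : h₀ ^ 2 < x * y := by nlinarith
  have key : h₀ ^ 3 < x * y * (x + y - h₀) := by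
    nlinarith [mul_nonneg (mul_pos hx0 hy0).le (show 0 ≤ x + y - 2 * h₀ by linarith)]
  nlinarith [mul_pos (sub_pos.2 hxy) (sub_pos.2 key)]

lemma shock_eq_sqrt (hh : h₀ ≤ h) :
    shock g h₀ h = √(g / (2 * h₀) * ((h + h₀) * (h - h₀) ^ 2 / h)) := by
  rw [shock, show g / (2 * h₀) * ((h + h₀) * (h - h₀) ^ 2 / h)
      = g * (h + h₀) / (2 * h * h₀) * (h - h₀) ^ 2 by ring,
    Real.sqrt_mul' _ (sq_nonneg _), Real.sqrt_sq (sub_nonneg.2 hh), mul_comm]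

lemma strictMonoOn_shock (hg : 0 < g) (hh₀ : 0 < h₀) : StrictMonoOn (shock g h₀) (Ici h₀) := by
  intro x (hx : h₀ ≤ x) y (hy : h₀ ≤ y) hxy
  have hx0 : 0 < x := hh₀.trans_le hx
  rw [shock_eq_sqrt hx, shock_eq_sqrt hy]
  refine Real.sqrt_lt_sqrt (by positivity) (mul_lt_mul_of_pos_left ?_ (by positivity))
  exact strictMonoOn_add_mul_sub_sq_div hh₀ hx hy hxy

lemma tendsto_shock_atTop (hg : 0 < g) (hh₀ : 0 < h₀) : Tendsto (shock g h₀) atTop atTop := by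
  have hc : 0 < √(g / (2 * h₀)) := Real.sqrt_pos.2 (by positivity)
  refine tendsto_atTop_mono' atTop ?_
    ((tendsto_atTop_add_const_right atTop (-h₀) tendsto_id).atTop_mul_const hc)
  filter_upwards [eventually_gt_atTop h₀] with h hh
  have hh0 : 0 < h := hh₀.trans hh
  refine mul_le_mul_of_nonneg_left (Real.sqrt_le_sqrt ?_) (by simp only [id]; linarith)
  rw [div_le_div_iff₀ (by positivity) (by positivity)]
  nlinarith [mul_pos (mul_pos hg hh₀) hh₀]

lemma waveCurve_of_le (hh : h ≤ h₀) : waveCurve g h₀ h = rarefaction g h₀ h := if_pos hh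

lemma waveCurve_of_lt (hh : h₀ < h) : waveCurve g h₀ h = shock g h₀ h := if_neg hh.not_ge

lemma eqOn_waveCurve_shock : EqOn (waveCurve g h₀) (shock g h₀) (Ici h₀) := by
  rintro h (hh : h₀ ≤ h)
  rcases hh.eq_or_lt with rfl | hlt
  · rw [waveCurve_of_le le_rfl, rarefaction_self, shock_self]
  · exact waveCurve_of_lt hlt

lemma continuousOn_waveCurve (hh₀ : 0 < h₀) : ContinuousOn (waveCurve g h₀) (Ioi 0) := by
  refine ContinuousOn.if ?_ continuous_rarefaction.continuousOn
    ((continuousOn_shock hh₀).mono inter_subset_left)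
  rintro h ⟨-, hh⟩
  rw [show {a | a ≤ h₀} = Iic h₀ from rfl, frontier_Iic] at hh
  rw [mem_singleton_iff.1 hh, rarefaction_self, shock_self]

lemma strictMonoOn_waveCurve (hg : 0 < g) (hh₀ : 0 < h₀) :
    StrictMonoOn (waveCurve g h₀) (Ioi 0) := by
  have hrare : StrictMonoOn (waveCurve g h₀) (Ioc 0 h₀) :=
    ((strictMonoOn_rarefaction hg).mono (Ioc_subset_Icc_self.trans Icc_subset_Ici_self)).congr
      fun h hh => (waveCurve_of_le hh.2).symm
  have hshock : StrictMonoOn (waveCurve g h₀) (Ici h₀) :=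
    (strictMonoOn_shock hg hh₀).congr eqOn_waveCurve_shock.symm
  rw [← Ioc_union_Ici_eq_Ioi hh₀]
  exact hrare.union hshock (isGreatest_Ioc hh₀) isLeast_Ici

lemma tendsto_waveCurve_nhdsGT_zero (hh₀ : 0 < h₀) :
    Tendsto (waveCurve g h₀) (𝓝[>] 0) (𝓝 (-(2 * √(g * h₀)))) := by
  have hlim : Tendsto (rarefaction g h₀) (𝓝[>] 0) (𝓝 (rarefaction g h₀ 0)) :=
    continuous_rarefaction.continuousWithinAt
  rw [rarefaction, mul_zero, Real.sqrt_zero, zero_sub, mul_neg] at hlim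
  refine hlim.congr' ?_
  filter_upwards [Ioc_mem_nhdsGT hh₀] with h hh
  exact (waveCurve_of_le hh.2).symm

lemma tendsto_waveCurve_atTop (hg : 0 < g) (hh₀ : 0 < h₀) :
    Tendsto (waveCurve g h₀) atTop atTop :=
  (tendsto_shock_atTop hg hh₀).congr'
    (eqOn_waveCurve_shock.eventuallyEq_of_mem (Ici_mem_atTop h₀)).symm

end ShallowWater

open ShallowWater

/-- Monotonicity, continuity and asymptotic behavior of the shallow water
wave-curve functions `Φ_ℓ` (strictly decreasing, from `v_ℓ + 2√(gh_ℓ)` at `0⁺`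
down to `−∞`) and `Φ_r` (strictly increasing, from `v_r − 2√(gh_r)` at `0⁺`
up to `+∞`). -/
theorem shallow_water_wave_curves_monotone
    (g hl hr vl vr : ℝ) (hg : 0 < g) (hhl : 0 < hl) (hhr : 0 < hr)
    (Φl Φr : ℝ → ℝ)
    (hΦl₁ : ∀ h : ℝ, 0 < h → h ≤ hl →
      Φl h = vl - 2 * (Real.sqrt (g * h) - Real.sqrt (g * hl)))
    (hΦl₂ : ∀ h : ℝ, hl < h →
      Φl h = vl - (h - hl) * Real.sqrt (g * (h + hl) / (2 * h * hl)))
    (hΦr₁ : ∀ h : ℝ, 0 < h → h ≤ hr →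
      Φr h = vr + 2 * (Real.sqrt (g * h) - Real.sqrt (g * hr)))
    (hΦr₂ : ∀ h : ℝ, hr < h →
      Φr h = vr + (h - hr) * Real.sqrt (g * (h + hr) / (2 * h * hr))) :
    ContinuousOn Φl (Ioi 0) ∧ StrictAntiOn Φl (Ioi 0) ∧
    Tendsto Φl (nhdsWithin 0 (Ioi 0)) (nhds (vl + 2 * Real.sqrt (g * hl))) ∧
    Tendsto Φl atTop atBot ∧
    ContinuousOn Φr (Ioi 0) ∧ StrictMonoOn Φr (Ioi 0) ∧
    Tendsto Φr (nhdsWithin 0 (Ioi 0)) (nhds (vr - 2 * Real.sqrt (g * hr))) ∧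
    Tendsto Φr atTop atTop := by
  have hL : EqOn (fun h => vl - waveCurve g hl h) Φl (Ioi 0) := fun h (hh : 0 < h) => by
    dsimp only
    rcases le_or_gt h hl with hle | hlt
    · rw [hΦl₁ h hh hle, waveCurve_of_le hle, rarefaction]
    · rw [hΦl₂ h hlt, waveCurve_of_lt hlt, shock]
  have hR : EqOn (fun h => vr + waveCurve g hr h) Φr (Ioi 0) := fun h (hh : 0 < h) => by
    dsimp only
    rcases le_or_gt h hr with hle | hlt
    · rw [hΦr₁ h hh hle, waveCurve_of_le hle, rarefaction]
    · rw [hΦr₂ h hlt, waveCurve_of_lt hlt, shock]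
  have hL₀ := (tendsto_waveCurve_nhdsGT_zero (g := g) hhl).const_sub vl
  have hR₀ := (tendsto_waveCurve_nhdsGT_zero (g := g) hhr).const_add vr
  rw [sub_neg_eq_add] at hL₀
  rw [← sub_eq_add_neg] at hR₀
  refine ⟨(continuousOn_const.sub (continuousOn_waveCurve hhl)).congr hL.symm,
    ?_, hL₀.congr' hL.eventuallyEq_nhdsWithin, ?_,
    (continuousOn_const.add (continuousOn_waveCurve hhr)).congr hR.symm,
    ?_, hR₀.congr' hR.eventuallyEq_nhdsWithin, ?_⟩
  · have : StrictAntiOn (fun h => vl - waveCurve g hl h) (Ioi 0) := fun x hx y hy hxy =>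
      sub_lt_sub_left (strictMonoOn_waveCurve hg hhl hx hy hxy) vl
    exact this.congr hL
  · refine Tendsto.congr' (hL.eventuallyEq_of_mem (Ioi_mem_atTop 0)) ?_
    simpa only [Function.comp_def, ← sub_eq_add_neg] using tendsto_atBot_add_const_left atTop vl
      (tendsto_neg_atTop_atBot.comp (tendsto_waveCurve_atTop hg hhl))
  · have : StrictMonoOn (fun h => vr + waveCurve g hr h) (Ioi 0) := fun x hx y hy hxy =>
      add_lt_add_right (strictMonoOn_waveCurve hg hhr hx hy hxy) vr
    exact this.congr hR
  · exact (tendsto_atTop_add_const_left atTop vr (tendsto_waveCurve_atTop hg hhr)).congr'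
      (hR.eventuallyEq_of_mem (Ioi_mem_atTop 0))
end

section
/- Let g > 0, h_ℓ, h_r > 0 and v_ℓ, v_r ∈ ℝ, and let Φ_ℓ, Φ_r : (0,∞) → ℝ be the shallow water wave-curve functions: Φ_ℓ(h) = v_ℓ − 2(√(gh) − √(gh_ℓ)) for h ≤ h_ℓ, Φ_ℓ(h) = v_ℓ − (h − h_ℓ)√(g(h + h_ℓ)/(2hh_ℓ)) for h > h_ℓ; Φ_r(h) = v_r + 2(√(gh) − √(gh_r)) for h ≤ h_r, Φ_r(h) = v_r + (h − h_r)√(g(h + h_r)/(2hh_r)) for h > h_r. If v_ℓ + 2√(g·h_ℓ) > v_r − 2√(g·h_r), then there exists a unique h* > 0 with Φ_ℓ(h*) = Φ_r(h*); hence the Riemann problem has a unique intermediate state (h*, h*v*) with v* = Φ_ℓ(h*). -/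
noncomputable def swPsi (g k h : ℝ) : ℝ :=
  if h ≤ k then 2 * (Real.sqrt (g * h) - Real.sqrt (g * k))
  else (h - k) * Real.sqrt (g * (h + k) / (2 * max h k * k))

lemma swPsi_le (g k h : ℝ) (hh : h ≤ k) :
    swPsi g k h = 2 * (Real.sqrt (g * h) - Real.sqrt (g * k)) := if_pos hh

lemma swPsi_gt (g k h : ℝ) (hh : k < h) :
    swPsi g k h = (h - k) * Real.sqrt (g * (h + k) / (2 * h * k)) := by
  rw [swPsi, if_neg (not_le.2 hh), max_eq_left hh.le]

lemma swPsi_eq_sqrt (g k h : ℝ) (hh : k < h) :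
    swPsi g k h = Real.sqrt ((h - k) ^ 2 * (g * (h + k) / (2 * h * k))) := by
  rw [swPsi_gt g k h hh, Real.sqrt_mul (sq_nonneg _),
    Real.sqrt_sq (by linarith : (0:ℝ) ≤ h - k)]

lemma swPsi_pos (g k h : ℝ) (hg : 0 < g) (hk : 0 < k) (hh : k < h) :
    0 < swPsi g k h := by
  rw [swPsi_gt g k h hh]
  have hh0 : 0 < h := hk.trans hh
  have h1 : 0 < g * (h + k) / (2 * h * k) := div_pos (by nlinarith) (by nlinarith)
  have := Real.sqrt_pos.mpr h1
  nlinarith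

lemma swPsi_nonpos (g k h : ℝ) (hg : 0 < g) (hh : h ≤ k) :
    swPsi g k h ≤ 0 := by
  rw [swPsi_le g k h hh]
  have : Real.sqrt (g * h) ≤ Real.sqrt (g * k) :=
    Real.sqrt_le_sqrt (by nlinarith)
  linarith

lemma swPsi_strictMonoOn (g k : ℝ) (hg : 0 < g) (hk : 0 < k) :
    StrictMonoOn (swPsi g k) (Set.Ioi 0) := by
  intro a ha b hb hab
  simp only [Set.mem_Ioi] at ha hb
  rcases le_or_gt b k with hbk | hbk
  · rw [swPsi_le g k a (hab.le.trans hbk), swPsi_le g k b hbk]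
    have : Real.sqrt (g * a) < Real.sqrt (g * b) :=
      Real.sqrt_lt_sqrt (by positivity) (by nlinarith)
    linarith
  · rcases le_or_gt a k with hak | hak
    · exact lt_of_le_of_lt (swPsi_nonpos g k a hg hak) (swPsi_pos g k b hg hk hbk)
    · rw [swPsi_eq_sqrt g k a hak, swPsi_eq_sqrt g k b hbk]
      apply Real.sqrt_lt_sqrt (by positivity)
      rw [mul_div_assoc', mul_div_assoc', div_lt_div_iff₀ (by positivity) (by positivity)]
      have h1 : k * k < a * b := by nlinarith
      have h2 : k < a + b - k := by linarith
      have key : k ^ 3 < a * b * (a + b - k) := by nlinarith [mul_lt_mul'' h1 h2 (by positivity) hk.le]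
      nlinarith [mul_pos (mul_pos (mul_pos two_pos hg) hk)
        (mul_pos (sub_pos.2 hab) (sub_pos.2 key))]

lemma swPsi_continuous (g k : ℝ) (hk : 0 < k) : Continuous (swPsi g k) := by
  have hden : ∀ x : ℝ, 2 * max x k * k ≠ 0 := by
    intro x
    have : 0 < max x k := lt_max_of_lt_right hk
    positivity
  have h2 : Continuous fun h : ℝ => (h - k) * Real.sqrt (g * (h + k) / (2 * max h k * k)) := by
    apply Continuous.mul (by fun_prop)
    apply Real.continuous_sqrt.comp
    exact Continuous.div (by fun_prop) (by fun_prop) hden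
  apply Continuous.if_le (by fun_prop) h2 continuous_id continuous_const
  intro x hx
  subst hx
  simp

/-- If `v_ℓ + 2√(gh_ℓ) > v_r − 2√(gh_r)` then the shallow water wave curves
`Φ_ℓ` and `Φ_r` intersect at a unique height `h* > 0`; hence the Riemann problem
has a unique intermediate state `(h*, h*v*)` with `v* = Φ_ℓ(h*)`. -/
theorem shallow_water_riemann_unique_intermediate_state
    (g hl hr vl vr : ℝ) (hg : 0 < g) (hhl : 0 < hl) (hhr : 0 < hr)
    (Φl Φr : ℝ → ℝ)
    (hΦl₁ : ∀ h : ℝ, 0 < h → h ≤ hl →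
      Φl h = vl - 2 * (Real.sqrt (g * h) - Real.sqrt (g * hl)))
    (hΦl₂ : ∀ h : ℝ, hl < h →
      Φl h = vl - (h - hl) * Real.sqrt (g * (h + hl) / (2 * h * hl)))
    (hΦr₁ : ∀ h : ℝ, 0 < h → h ≤ hr →
      Φr h = vr + 2 * (Real.sqrt (g * h) - Real.sqrt (g * hr)))
    (hΦr₂ : ∀ h : ℝ, hr < h →
      Φr h = vr + (h - hr) * Real.sqrt (g * (h + hr) / (2 * h * hr)))
    (hcond : vr - 2 * Real.sqrt (g * hr) < vl + 2 * Real.sqrt (g * hl)) :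
    ∃! hstar : ℝ, 0 < hstar ∧ Φl hstar = Φr hstar := by
  obtain ⟨F, hF⟩ : ∃ F : ℝ → ℝ,
      ∀ h, F h = (vl - swPsi g hl h) - (vr + swPsi g hr h) := ⟨_, fun _ => rfl⟩
  -- Φl, Φr in terms of swPsi
  have hΦl : ∀ h : ℝ, 0 < h → Φl h = vl - swPsi g hl h := by
    intro h hh
    rcases le_or_gt h hl with h1 | h1
    · rw [hΦl₁ h hh h1, swPsi_le g hl h h1]
    · rw [hΦl₂ h h1, swPsi_gt g hl h h1]
  have hΦr : ∀ h : ℝ, 0 < h → Φr h = vr + swPsi g hr h := by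
    intro h hh
    rcases le_or_gt h hr with h1 | h1
    · rw [hΦr₁ h hh h1, swPsi_le g hr h h1]
    · rw [hΦr₂ h h1, swPsi_gt g hr h h1]
  -- F is strictly antitone on (0, ∞)
  have hanti : StrictAntiOn F (Set.Ioi 0) := by
    intro a ha b hb hab
    have h1 := swPsi_strictMonoOn g hl hg hhl ha hb hab
    have h2 := swPsi_strictMonoOn g hr hg hhr ha hb hab
    rw [hF, hF]
    linarith
  -- the gap
  obtain ⟨δ, hδ⟩ : ∃ d : ℝ,
      d = (vl + 2 * Real.sqrt (g * hl)) - (vr - 2 * Real.sqrt (g * hr)) := ⟨_, rfl⟩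
  have hδpos : 0 < δ := by rw [hδ]; linarith
  -- small point
  obtain ⟨h0, hh0def⟩ : ∃ x : ℝ, x = min (min hl hr) (δ ^ 2 / (32 * g)) := ⟨_, rfl⟩
  have hh0pos : 0 < h0 := by
    rw [hh0def]
    exact lt_min (lt_min hhl hhr) (by positivity)
  have hle_l : h0 ≤ hl := hh0def.le.trans (le_trans (min_le_left _ _) (min_le_left _ _))
  have hle_r : h0 ≤ hr := hh0def.le.trans (le_trans (min_le_left _ _) (min_le_right _ _))
  have hFh0 : 0 < F h0 := by
    have hsq : Real.sqrt (g * h0) < δ / 4 := by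
      rw [Real.sqrt_lt' (by positivity)]
      have h3 : h0 ≤ δ ^ 2 / (32 * g) := hh0def.le.trans (min_le_right _ _)
      have h4 : g * h0 ≤ δ ^ 2 / 32 := by
        have := mul_le_mul_of_nonneg_left h3 hg.le
        have hexp : g * (δ ^ 2 / (32 * g)) = δ ^ 2 / 32 := by field_simp
        linarith
      nlinarith
    rw [hF, swPsi_le g hl h0 hle_l, swPsi_le g hr h0 hle_r]
    rw [hδ] at hsq
    nlinarith
  -- big point
  obtain ⟨c, hc⟩ : ∃ x : ℝ, x = Real.sqrt (g / (2 * hl)) := ⟨_, rfl⟩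
  have hcpos : 0 < c := hc ▸ Real.sqrt_pos.mpr (by positivity)
  obtain ⟨h1, hh1def⟩ : ∃ x : ℝ,
      x = max hl hr + 1 + max 0 (vl - vr) / c := ⟨_, rfl⟩
  have hmaxd : (0:ℝ) ≤ max 0 (vl - vr) / c := by positivity
  have hh1l : hl < h1 := by
    have := le_max_left hl hr
    rw [hh1def]; linarith
  have hh1r : hr < h1 := by
    have := le_max_right hl hr
    rw [hh1def]; linarith
  have hFh1 : F h1 < 0 := by
    have hpsir : 0 < swPsi g hr h1 := swPsi_pos g hr h1 hg hhr hh1r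
    have hpsil : vl - vr < swPsi g hl h1 := by
      rw [swPsi_gt g hl h1 hh1l]
      have hh1pos : 0 < h1 := hhl.trans hh1l
      have harg : g / (2 * hl) ≤ g * (h1 + hl) / (2 * h1 * hl) := by
        rw [div_le_div_iff₀ (by positivity) (by positivity)]
        nlinarith [mul_pos hg (mul_pos hhl hhl)]
      have hsqle : c ≤ Real.sqrt (g * (h1 + hl) / (2 * h1 * hl)) :=
        hc ▸ Real.sqrt_le_sqrt harg
      have hfac : 1 + max 0 (vl - vr) / c ≤ h1 - hl := by
        have := le_max_left hl hr
        rw [hh1def]; linarith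
      have key : c + max 0 (vl - vr) ≤ (h1 - hl) * c := by
        have h5 := mul_le_mul_of_nonneg_right hfac hcpos.le
        have hdc : (1 + max 0 (vl - vr) / c) * c = c + max 0 (vl - vr) := by
          field_simp
        linarith
      have h2 : (h1 - hl) * c ≤ (h1 - hl) * Real.sqrt (g * (h1 + hl) / (2 * h1 * hl)) :=
        mul_le_mul_of_nonneg_left hsqle (by linarith)
      have h6 := le_max_right 0 (vl - vr)
      linarith
    rw [hF]
    linarith
  -- IVT
  have hcontF : Continuous F := by
    have hFeq : F = fun h => (vl - swPsi g hl h) - (vr + swPsi g hr h) := funext hF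
    rw [hFeq]
    have hc1 := swPsi_continuous g hl hhl
    have hc2 := swPsi_continuous g hr hhr
    fun_prop
  have hh01 : h0 ≤ h1 := by linarith
  have hsub : Set.Icc (F h1) (F h0) ⊆ F '' Set.Icc h0 h1 :=
    intermediate_value_Icc' hh01 hcontF.continuousOn
  obtain ⟨hs, hsmem, hsF⟩ := hsub ⟨hFh1.le, hFh0.le⟩
  have hspos : 0 < hs := lt_of_lt_of_le hh0pos hsmem.1
  refine ⟨hs, ⟨hspos, ?_⟩, ?_⟩
  · rw [hΦl hs hspos, hΦr hs hspos]
    rw [hF] at hsF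
    linarith
  · rintro y ⟨hy, hyeq⟩
    rw [hΦl y hy, hΦr y hy] at hyeq
    have hFy : F y = 0 := by rw [hF]; linarith
    exact hanti.injOn hy hspos (by rw [hFy, hsF])
end

section
/- Let g > 0, λ > 0, and Δt, Δx > 0 with λ·Δt ≤ Δx. Let h₋, h₀, h₊ ≥ 0 and v₋, v₀, v₊ ∈ ℝ with λ ≥ |v_j| + √(g·h_j) for each j ∈ {−, 0, +}, and set q_j = h_j·v_j. Define the numerical mass flux 𝓕(h_L, q_L, h_R, q_R) = (q_L + q_R)/2 − (λ/2)(h_R − h_L). Then the updated height h₀ − (Δt/Δx)·(𝓕(h₀, q₀, h₊, q₊) − 𝓕(h₋, q₋, h₀, q₀)) is nonnegative; i.e. the two-velocity relaxation scheme with kinetic speeds ±λ chosen no smaller than max(|v| + √(gh)) preserves nonnegativity of the water height under the CFL condition λΔt ≤ Δx. -/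
/-- The two-velocity relaxation scheme with kinetic speeds `±λ` chosen no smaller
than `max(|v| + √(gh))` preserves nonnegativity of the water height under the
CFL condition `λΔt ≤ Δx`. -/
theorem relaxation_scheme_height_nonnegativity
    (g lam dt dx : ℝ) (hg : 0 < g) (hlam : 0 < lam)
    (hdt : 0 < dt) (hdx : 0 < dx) (hcfl : lam * dt ≤ dx)
    (hm h0 hp vm v0 vp : ℝ)
    (hhm : 0 ≤ hm) (hh0 : 0 ≤ h0) (hhp : 0 ≤ hp)
    (hspeedm : |vm| + Real.sqrt (g * hm) ≤ lam)
    (hspeed0 : |v0| + Real.sqrt (g * h0) ≤ lam)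
    (hspeedp : |vp| + Real.sqrt (g * hp) ≤ lam)
    (qm q0 qp : ℝ) (hqm : qm = hm * vm) (hq0 : q0 = h0 * v0) (hqp : qp = hp * vp)
    (F : ℝ → ℝ → ℝ → ℝ → ℝ)
    (hF : ∀ hL qL hR qR : ℝ,
      F hL qL hR qR = (qL + qR) / 2 - (lam / 2) * (hR - hL)) :
    0 ≤ h0 - (dt / dx) * (F h0 q0 hp qp - F hm qm h0 q0) := by
  have hvm : |vm| ≤ lam := le_trans (le_add_of_nonneg_right (Real.sqrt_nonneg _)) hspeedm
  have hvp : |vp| ≤ lam := le_trans (le_add_of_nonneg_right (Real.sqrt_nonneg _)) hspeedp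
  obtain ⟨hvm1, hvm2⟩ := abs_le.mp hvm
  obtain ⟨hvp1, hvp2⟩ := abs_le.mp hvp
  have a1 : 0 ≤ hm * (lam + vm) := mul_nonneg hhm (by linarith)
  have a2 : 0 ≤ hp * (lam - vp) := mul_nonneg hhp (by linarith)
  have a3 : 0 ≤ h0 * (dx - lam * dt) := mul_nonneg hh0 (by linarith)
  rw [hF, hF, hqm, hqp, hq0, sub_nonneg, div_mul_eq_mul_div, div_le_iff₀ hdx]
  nlinarith [mul_nonneg hdt.le a1, mul_nonneg hdt.le a2]
end

section
/- Let g > 0, λ > 0, c > 0 (the ratio Δt/Δx), and C ∈ ℝ. Let z₋, z₀, z₊ ∈ ℝ (bottom heights) and h₋, h₀, h₊ > 0 with h_j + z_j = C for j ∈ {−, 0, +} and all velocities equal to zero. Define interface bottoms z_{+1/2} = max(z₀, z₊), z_{−1/2} = max(z₋, z₀) and reconstructed heights h_{+1/2}⁻ = max(0, h₀ + z₀ − z_{+1/2}), h_{+1/2}⁺ = max(0, h₊ + z₊ − z_{+1/2}), h_{−1/2}⁻ = max(0, h₋ + z₋ − z_{−1/2}), h_{−1/2}⁺ = max(0, h₀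 + z₀ − z_{−1/2}). Apply the flux 𝓕(U⁻, U⁺) = (F(U⁻) + F(U⁺))/2 − (λ/2)(U⁺ − U⁻), with F(h, q) = (q, q²/h + ½gh²), to the reconstructed interface states (h_{±1/2}⁻, 0) and (h_{±1/2}⁺, 0), and add the well-balanced source term S = (0, ½g(h_{+1/2}⁻)² − ½g(h_{−1/2}⁺)²). Then the update h₀' = h₀ − c·(𝓕^h_{+1/2} − 𝓕^h_{−1/2}) and q₀' = 0 − c·(𝓕^q_{+1/2} − 𝓕^q_{−1/2}) + c·S^q satisfies h₀' = h₀ and q₀' = 0; i.e. the hydrostatic-reconstruction well-balanced scheme exactly preserves the lake-at-rest steady state. -/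
/-- The hydrostatic-reconstruction well-balanced scheme (with an HLL/Rusanov-type
numerical flux and the centered source term) exactly preserves the lake-at-rest
steady state `v ≡ 0`, `h + z ≡ C`. -/
theorem hydrostatic_reconstruction_well_balanced
    (g lam c C : ℝ) (hg : 0 < g) (hlam : 0 < lam) (hc : 0 < c)
    (zm z0 zp hm h0 hp : ℝ)
    (hhm : 0 < hm) (hh0 : 0 < h0) (hhp : 0 < hp)
    (lakem : hm + zm = C) (lake0 : h0 + z0 = C) (lakep : hp + zp = C)
    (F : ℝ × ℝ → ℝ × ℝ)
    (hF : ∀ h q : ℝ, F (h, q) = (q, q ^ 2 / h + (1 / 2) * g * h ^ 2))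
    (Flux : ℝ × ℝ → ℝ × ℝ → ℝ × ℝ)
    (hFlux : ∀ Um Up : ℝ × ℝ,
      Flux Um Up = (1 / 2 : ℝ) • (F Um + F Up) - (lam / 2) • (Up - Um))
    (zph zmh hpminus hpplus hmminus hmplus : ℝ)
    (hzph : zph = max z0 zp) (hzmh : zmh = max zm z0)
    (hhpminus : hpminus = max 0 (h0 + z0 - zph))
    (hhpplus : hpplus = max 0 (hp + zp - zph))
    (hhmminus : hmminus = max 0 (hm + zm - zmh))
    (hhmplus : hmplus = max 0 (h0 + z0 - zmh))
    (Fp Fm : ℝ × ℝ) (Sq : ℝ)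
    (hFp : Fp = Flux (hpminus, 0) (hpplus, 0))
    (hFm : Fm = Flux (hmminus, 0) (hmplus, 0))
    (hSq : Sq = (1 / 2) * g * hpminus ^ 2 - (1 / 2) * g * hmplus ^ 2) :
    h0 - c * (Fp.1 - Fm.1) = h0 ∧ 0 - c * (Fp.2 - Fm.2) + c * Sq = 0 := by
  have hpe : hpminus = hpplus := by
    rw [hhpminus, hhpplus, lake0, ← lakep]
  have hme : hmminus = hmplus := by
    rw [hhmminus, hhmplus, lakem, ← lake0]
  subst hFp hFm hSq
  rw [hFlux, hFlux, hF, hF, hF, hF, hpe, hme]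
  constructor <;> simp [Prod.add_def, Prod.sub_def, Prod.smul_def] <;> ring
end
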